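/- The map g = ln ∘ f_transfer : [0,1] → ℝ^ℕ, defined by g(x)_n = max(ln x, -n) (with ln 0 = -∞ so g(0)_n = -n), is a continuous injective map satisfying g(max(λ·x, y)) = max(ln λ + g(x), g(y)) coordinatewise for all λ, x, y ∈ [0,1]. -/

import Mathlib

/-- Extended logarithm with `ln 0 = -∞`. -/
noncomputable def elog (x : ℝ) : EReal :=
  if x = 0 then ⊥ else ((Real.log x : ℝ) : EReal)

/-- The map `g : [0,1] → ℝ^ℕ`, `g(x)_n = max (ln x) (-n)` (with `ln 0 = -∞`,
so `g(0)_n = -n`). -/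
noncomputable def logTrunc (x : ℝ) : ℕ → ℝ :=
  fun n => ((elog x) ⊔ ((-(n : ℝ) : ℝ) : EReal)).toReal

/-!
Each coordinate `x ↦ max (ln x) (-n) = ln (max x e⁻ⁿ)` is continuous on `[0, ∞)`, and
`exp (g(x)_n) = max x e⁻ⁿ → x` recovers `x`, which gives injectivity. The functional equation
is computed in `EReal`, where `ln` turns products into sums and maxima into maxima; the extra term
`ln λ - n` it produces is absorbed by `-n` because `ln λ ≤ 0`.
-/

open Filter Topology

lemma elog_zero : elog 0 = ⊥ := if_pos rfl

lemma elog_of_ne_zero {x : ℝ} (hx : x ≠ 0) : elog x = Real.log x := if_neg hx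

lemma elog_ne_top (x : ℝ) : elog x ≠ ⊤ := by
  unfold elog
  split_ifs <;> simp

lemma elog_exp (r : ℝ) : elog (Real.exp r) = r := by
  rw [elog_of_ne_zero (Real.exp_pos r).ne', Real.log_exp]

lemma elog_nonpos {x : ℝ} (h0 : 0 ≤ x) (h1 : x ≤ 1) : elog x ≤ 0 := by
  rcases h0.eq_or_lt with rfl | hpos
  · simp [elog_zero]
  · rw [elog_of_ne_zero hpos.ne']
    exact_mod_cast Real.log_nonpos h0 h1

lemma elog_monotoneOn : MonotoneOn elog (Set.Ici 0) := by
  intro a ha b _ hab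
  rcases (Set.mem_Ici.mp ha).eq_or_lt with rfl | hpos
  · simp [elog_zero]
  · rw [elog_of_ne_zero hpos.ne', elog_of_ne_zero (hpos.trans_le hab).ne']
    exact_mod_cast Real.log_le_log hpos hab

lemma elog_max {a b : ℝ} (ha : 0 ≤ a) (hb : 0 ≤ b) :
    elog (max a b) = max (elog a) (elog b) :=
  elog_monotoneOn.map_max ha hb

lemma elog_mul (a b : ℝ) : elog (a * b) = elog a + elog b := by
  rcases eq_or_ne a 0 with rfl | ha
  · simp [elog_zero]
  rcases eq_or_ne b 0 with rfl | hb
  · simp [elog_zero]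
  rw [elog_of_ne_zero (mul_ne_zero ha hb), elog_of_ne_zero ha, elog_of_ne_zero hb,
    Real.log_mul ha hb, EReal.coe_add]

lemma coe_logTrunc (x : ℝ) (n : ℕ) :
    ((logTrunc x n : ℝ) : EReal) = max (elog x) ((-(n : ℝ) : ℝ) : EReal) :=
  EReal.coe_toReal (max_lt (elog_ne_top x).lt_top (EReal.coe_lt_top _)).ne
    (ne_bot_of_le_ne_bot (EReal.coe_ne_bot _) (le_max_right _ _))

lemma logTrunc_eq_log_max {x : ℝ} (hx : 0 ≤ x) (n : ℕ) :
    logTrunc x n = Real.log (max x (Real.exp (-n))) := by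
  have hpos : 0 < max x (Real.exp (-n)) := lt_max_of_lt_right (Real.exp_pos _)
  apply EReal.coe_injective
  rw [coe_logTrunc, ← elog_of_ne_zero hpos.ne', elog_max hx (Real.exp_pos _).le, elog_exp]

lemma continuousOn_logTrunc : ContinuousOn logTrunc (Set.Ici 0) := by
  refine continuousOn_pi.mpr fun n => ?_
  refine ContinuousOn.congr ?_ fun x hx => logTrunc_eq_log_max hx n
  exact ((continuous_id.max continuous_const).log
    fun x => (lt_max_of_lt_right (Real.exp_pos _)).ne').continuousOn

lemma tendsto_exp_logTrunc {x : ℝ} (hx : 0 ≤ x) :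
    Tendsto (fun n => Real.exp (logTrunc x n)) atTop (𝓝 x) := by
  have hexp : Tendsto (fun n : ℕ => Real.exp (-n)) atTop (𝓝 0) :=
    Real.tendsto_exp_neg_atTop_nhds_zero.comp tendsto_natCast_atTop_atTop
  have hmax := (tendsto_const_nhds (x := x)).max hexp
  rw [max_eq_left hx] at hmax
  refine hmax.congr fun n => ?_
  rw [logTrunc_eq_log_max hx, Real.exp_log (lt_max_of_lt_right (Real.exp_pos _))]

lemma injOn_logTrunc : Set.InjOn logTrunc (Set.Ici 0) := fun _ hx _ hy hxy =>
  tendsto_nhds_unique (tendsto_exp_logTrunc hx) (hxy ▸ tendsto_exp_logTrunc hy)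

lemma coe_logTrunc_max_mul {lam x y : ℝ} (hl0 : 0 ≤ lam) (hl1 : lam ≤ 1) (hx : 0 ≤ x)
    (hy : 0 ≤ y) (n : ℕ) :
    ((logTrunc (max (lam * x) y) n : ℝ) : EReal) =
      max (elog lam + (logTrunc x n : ℝ)) ((logTrunc y n : ℝ) : EReal) := by
  set m : EReal := ((-(n : ℝ) : ℝ) : EReal)
  have habsorb : elog lam + m ≤ m := by
    simpa using add_le_add_left (elog_nonpos hl0 hl1) m
  rw [coe_logTrunc, coe_logTrunc, coe_logTrunc, elog_max (mul_nonneg hl0 hx) hy, elog_mul,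
    ← max_add_add_left, max_max_max_comm, max_eq_right habsorb]

/-- `g` is continuous and injective on `[0,1]` and satisfies
`g (max (λ·x) y) = max (ln λ + g x) (g y)` coordinatewise for all
`λ, x, y ∈ [0,1]`. -/
theorem logTrunc_embedding_affine :
    ContinuousOn logTrunc (Set.Icc (0 : ℝ) 1) ∧
    Set.InjOn logTrunc (Set.Icc (0 : ℝ) 1) ∧
    (∀ lam ∈ Set.Icc (0 : ℝ) 1, ∀ x ∈ Set.Icc (0 : ℝ) 1,
      ∀ y ∈ Set.Icc (0 : ℝ) 1, ∀ n : ℕ,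
        ((logTrunc (max (lam * x) y) n : ℝ) : EReal) =
          max (elog lam + (logTrunc x n : ℝ)) ((logTrunc y n : ℝ) : EReal)) :=
  ⟨continuousOn_logTrunc.mono Set.Icc_subset_Ici_self,
    injOn_logTrunc.mono Set.Icc_subset_Ici_self,
    fun _ hl _ hx _ hy n => coe_logTrunc_max_mul hl.1 hl.2 hx.1 hy.1 n⟩
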